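/- With notation as in the Leibniz-algebra-to-Leibniz-triple-system setting, let $\phi_1,\phi_2$ be 2-cocycles of the Leibniz algebra $(V,[\cdot,\cdot]_T)$ with coefficients in $(L;\rho^l_T,\rho^r_T)$ that lie in the same cohomology class, i.e., $\phi_2-\phi_1 = d_T(\alpha)$ for some linear map $\alpha:V\to L$. Define $\omega_i(u,v,w)=\phi_i([u,v]_T,w)+\rho^r_T(w)\phi_i(u,v)$. Then $\omega_2 - \omega_1 = \partial^1(\alpha)$, so $\omega_1,\omega_2$ are in the same cohomology class of the associated Leibniz triple system cohomology. -/

import Mathlib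

def IsTrilin (K : Type*) [Field K] {L M : Type*} [AddCommGroup L] [Module K L]
    [AddCommGroup M] [Module K M] (t : L → L → L → M) : Prop :=
  (∀ y z, IsLinearMap K fun x => t x y z) ∧ (∀ x z, IsLinearMap K fun y => t x y z) ∧
    (∀ x y, IsLinearMap K fun z => t x y z)

def LTSIdent {L : Type*} [AddCommGroup L] (t : L → L → L → L) : Prop :=
  (∀ a b c d e, t a b (t c d e) =
      t (t a b c) d e - t (t a b d) c e - t (t a b e) c d + t (t a b e) d c) ∧
  (∀ a b c d e, t a (t b c d) e =
      t (t a b c) d e - t (t a c b) d e - t (t a d b) c e + t (t a d c) b e)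

def IsLTS (K : Type*) [Field K] {L : Type*} [AddCommGroup L] [Module K L]
    (t : L → L → L → L) : Prop := IsTrilin K t ∧ LTSIdent t

def sd {L V : Type*} [AddCommGroup L] [AddCommGroup V]
    (t : L → L → L → L) (l m r : L → L → V → V) :
    L × V → L × V → L × V → L × V :=
  fun p q s => (t p.1 q.1 s.1, l p.1 q.1 s.2 + m p.1 s.1 q.2 + r q.1 s.1 p.2)

def IsRep (K : Type*) [Field K] {L V : Type*} [AddCommGroup L] [Module K L]
    [AddCommGroup V] [Module K V] (t : L → L → L → L) (l m r : L → L → V → V) : Prop :=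
  IsLTS K (sd t l m r)

def IsRRB {K : Type*} [Field K] {L V : Type*} [AddCommGroup L] [Module K L]
    [AddCommGroup V] [Module K V] (t : L → L → L → L) (l m r : L → L → V → V)
    (T : V →ₗ[K] L) : Prop :=
  ∀ u v w, t (T u) (T v) (T w) =
    T (l (T u) (T v) w + m (T u) (T w) v + r (T v) (T w) u)

def IsRB {K : Type*} [Field K] {L : Type*} [AddCommGroup L] [Module K L]
    (t : L → L → L → L) (R : L →ₗ[K] L) : Prop :=
  ∀ x y z, t (R x) (R y) (R z) =
    R (t (R x) (R y) z + t (R x) y (R z) + t x (R y) (R z))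

def IsNij {K : Type*} [Field K] {A : Type*} [AddCommGroup A] [Module K A]
    (t : A → A → A → A) (N : A →ₗ[K] A) : Prop :=
  ∀ x y z, t (N x) (N y) (N z) =
    N (t (N x) (N y) z) + N (t x (N y) (N z)) + N (t (N x) y (N z))
      - N (N (t (N x) y z)) - N (N (t x (N y) z)) - N (N (t x y (N z)))
      + N (N (N (t x y z)))

def IsLeib {K : Type*} [Field K] {L : Type*} [AddCommGroup L] [Module K L]
    (b : L →ₗ[K] L →ₗ[K] L) : Prop :=
  ∀ x y z, b x (b y z) = b (b x y) z - b (b x z) y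

def IsLeibRep {K : Type*} [Field K] {L V : Type*} [AddCommGroup L] [Module K L]
    [AddCommGroup V] [Module K V] (b : L →ₗ[K] L →ₗ[K] L)
    (ρl ρr : L →ₗ[K] Module.End K V) : Prop :=
  (∀ x y, ρl (b x y) = ρr y * ρl x - ρl x * ρr y) ∧
    (∀ x y, ρl (b x y) = ρl x * ρl y + ρr y * ρl x) ∧
    (∀ x y, ρr (b x y) = ρr y * ρr x - ρr x * ρr y)

/-- The induced Leibniz bracket `[u,v]_T = ρˡ(Tu)v + ρʳ(Tv)u` on `V`. -/
def bT {K : Type*} [Field K] {L V : Type*} [AddCommGroup L] [Module K L]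
    [AddCommGroup V] [Module K V] (ρl ρr : L →ₗ[K] Module.End K V)
    (T : V →ₗ[K] L) (u v : V) : V :=
  ρl (T u) v + ρr (T v) u

/-- `ρˡ_T(u)x = [Tu,x] - T ρʳ(x) u`. -/
def rlT {K : Type*} [Field K] {L V : Type*} [AddCommGroup L] [Module K L]
    [AddCommGroup V] [Module K V] (b : L →ₗ[K] L →ₗ[K] L)
    (ρr : L →ₗ[K] Module.End K V) (T : V →ₗ[K] L) (u : V) (x : L) : L :=
  b (T u) x - T (ρr x u)

/-- `ρʳ_T(u)x = [x,Tu] - T ρˡ(x) u`. -/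
def rrT {K : Type*} [Field K] {L V : Type*} [AddCommGroup L] [Module K L]
    [AddCommGroup V] [Module K V] (b : L →ₗ[K] L →ₗ[K] L)
    (ρl : L →ₗ[K] Module.End K V) (T : V →ₗ[K] L) (u : V) (x : L) : L :=
  b x (T u) - T (ρl x u)

/-
`ω` depends additively on `φ` because `ρʳ_T(w)` is additive, so `ω₂ - ω₁` is the `ω` built
from `φ₂ - φ₁ = d_T α`; in `d_T α([u,v]_T, w) + ρʳ_T(w) (d_T α)(u,v)` the two terms
`± ρʳ_T(w) α([u,v]_T)` cancel, and what remains is `∂¹ α (u,v,w)`.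
-/

section InducedRepresentation

variable {K : Type*} [Field K] {L V : Type*} [AddCommGroup L] [Module K L]
  [AddCommGroup V] [Module K V]
  (b : L →ₗ[K] L →ₗ[K] L) (ρl ρr : L →ₗ[K] Module.End K V) (T : V →ₗ[K] L)

theorem rrT_add (w : V) (x y : L) :
    rrT b ρl T w (x + y) = rrT b ρl T w x + rrT b ρl T w y := by
  simp only [rrT, map_add, LinearMap.add_apply]
  abel

theorem rrT_sub (w : V) (x y : L) :
    rrT b ρl T w (x - y) = rrT b ρl T w x - rrT b ρl T w y := by
  simp only [rrT, map_sub, LinearMap.sub_apply]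
  abel

theorem dT_bT_add_rrT_dT (α : V →ₗ[K] L) (u v w : V) :
    (rlT b ρr T (bT ρl ρr T u v) (α w) + rrT b ρl T w (α (bT ρl ρr T u v))
        - α (bT ρl ρr T (bT ρl ρr T u v) w))
      + rrT b ρl T w (rlT b ρr T u (α v) + rrT b ρl T v (α u) - α (bT ρl ρr T u v)) =
    rlT b ρr T (bT ρl ρr T u v) (α w)
      + rrT b ρl T w (rlT b ρr T u (α v))
      + rrT b ρl T w (rrT b ρl T v (α u))
      - α (bT ρl ρr T (bT ρl ρr T u v) w) := by
  rw [rrT_sub, rrT_add]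
  abel

end InducedRepresentation

theorem stmt19_general {K : Type*} [Field K] {L V : Type*} [AddCommGroup L] [Module K L]
    [AddCommGroup V] [Module K V]
    (b : L →ₗ[K] L →ₗ[K] L)
    (ρl ρr : L →ₗ[K] Module.End K V)
    (T : V →ₗ[K] L)
    (φ₁ φ₂ : V →ₗ[K] V →ₗ[K] L)
    (α : V →ₗ[K] L)
    (hα : ∀ u v, φ₂ u v - φ₁ u v =
      rlT b ρr T u (α v) + rrT b ρl T v (α u) - α (bT ρl ρr T u v)) :
    ∀ u v w,
      (φ₂ (bT ρl ρr T u v) w + rrT b ρl T w (φ₂ u v))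
        - (φ₁ (bT ρl ρr T u v) w + rrT b ρl T w (φ₁ u v)) =
      rlT b ρr T (bT ρl ρr T u v) (α w)
        + rrT b ρl T w (rlT b ρr T u (α v))
        + rrT b ρl T w (rrT b ρl T v (α u))
        - α (bT ρl ρr T (bT ρl ρr T u v) w) := by
  intro u v w
  calc (φ₂ (bT ρl ρr T u v) w + rrT b ρl T w (φ₂ u v))
        - (φ₁ (bT ρl ρr T u v) w + rrT b ρl T w (φ₁ u v))
      = (φ₂ (bT ρl ρr T u v) w - φ₁ (bT ρl ρr T u v) w)
          + rrT b ρl T w (φ₂ u v - φ₁ u v) := by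
        rw [rrT_sub]
        abel
    _ = _ := by
        rw [hα, hα]
        exact dT_bT_add_rrT_dT b ρl ρr T α u v w

theorem stmt19 {K : Type*} [Field K] {L V : Type*} [AddCommGroup L] [Module K L]
    [AddCommGroup V] [Module K V]
    (b : L →ₗ[K] L →ₗ[K] L) (hb : IsLeib b)
    (ρl ρr : L →ₗ[K] Module.End K V) (hrep : IsLeibRep b ρl ρr)
    (T : V →ₗ[K] L) (hT : ∀ u v, b (T u) (T v) = T (ρl (T u) v + ρr (T v) u))
    (φ₁ φ₂ : V →ₗ[K] V →ₗ[K] L)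
    (hφ₁ : ∀ u v w,
      rlT b ρr T u (φ₁ v w) - rrT b ρl T w (φ₁ u v) + rrT b ρl T v (φ₁ u w)
        + φ₁ u (bT ρl ρr T v w) - φ₁ (bT ρl ρr T u v) w + φ₁ (bT ρl ρr T u w) v = 0)
    (hφ₂ : ∀ u v w,
      rlT b ρr T u (φ₂ v w) - rrT b ρl T w (φ₂ u v) + rrT b ρl T v (φ₂ u w)
        + φ₂ u (bT ρl ρr T v w) - φ₂ (bT ρl ρr T u v) w + φ₂ (bT ρl ρr T u w) v = 0)
    (α : V →ₗ[K] L)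
    (hα : ∀ u v, φ₂ u v - φ₁ u v =
      rlT b ρr T u (α v) + rrT b ρl T v (α u) - α (bT ρl ρr T u v)) :
    ∀ u v w,
      (φ₂ (bT ρl ρr T u v) w + rrT b ρl T w (φ₂ u v))
        - (φ₁ (bT ρl ρr T u v) w + rrT b ρl T w (φ₁ u v)) =
      rlT b ρr T (bT ρl ρr T u v) (α w)
        + rrT b ρl T w (rlT b ρr T u (α v))
        + rrT b ρl T w (rrT b ρl T v (α u))
        - α (bT ρl ρr T (bT ρl ρr T u v) w) :=
  stmt19_general b ρl ρr T φ₁ φ₂ α hα
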